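/- arXiv:2505.23162 — 2 statements merged into one kernel-verified Lean document; each statement's English description precedes it below -/
import Mathlib

section
/- There exists a 2-connected outerplanar graph with at most 24 vertices whose pathwidth is at least 4; consequently M_3 ≤ 23. -/
open SimpleGraph

/-- `X : Fin m → Finset V` is a path-decomposition of `G`: every vertex is in some bag,
every edge has both ends in some bag, and bags containing a fixed vertex form an interval. -/
def IsPathDecomp {V : Type*} (G : SimpleGraph V) (m : ℕ) (X : Fin m → Finset V) : Prop :=
  (∀ v : V, ∃ i, v ∈ X i) ∧
  (∀ u v : V, G.Adj u v → ∃ i, u ∈ X i ∧ v ∈ X i) ∧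
  (∀ i j k : Fin m, i ≤ j → j ≤ k → ∀ v : V, v ∈ X i → v ∈ X k → v ∈ X j)

/-- The pathwidth of a graph: the least `w` admitting a path-decomposition
all of whose bags have at most `w + 1` vertices. -/
noncomputable def pathwidth {V : Type*} (G : SimpleGraph V) : ℕ :=
  sInf { w | ∃ (m : ℕ) (X : Fin m → Finset V), IsPathDecomp G m X ∧ ∀ i, (X i).card ≤ w + 1 }

/-- `H` is a minor of `G`: there are pairwise disjoint connected branch sets in `G`,
one for each vertex of `H`, with an edge of `G` between the branch sets of any two
adjacent vertices of `H`. -/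
def SimpleGraph.IsMinorOf {W V : Type*} (H : SimpleGraph W) (G : SimpleGraph V) : Prop :=
  ∃ B : W → Set V,
    (∀ w, (G.induce (B w)).Connected) ∧
    (∀ w w', w ≠ w' → Disjoint (B w) (B w')) ∧
    (∀ w w', H.Adj w w' → ∃ u ∈ B w, ∃ v ∈ B w', G.Adj u v)

/-- A graph is outerplanar iff it contains neither `K₄` nor `K_{2,3}` as a minor. -/
def Outerplanar {V : Type*} (G : SimpleGraph V) : Prop :=
  ¬ (completeGraph (Fin 4)).IsMinorOf G ∧
  ¬ (completeBipartiteGraph (Fin 2) (Fin 3)).IsMinorOf G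

/-- `I_k(G)`: the maximum number of vertices of an induced subgraph of `G`
having pathwidth at most `k`. -/
noncomputable def maxInducedPW {V : Type*} (G : SimpleGraph V) (k : ℕ) : ℕ :=
  sSup { n | ∃ s : Finset V, pathwidth (G.induce (↑s : Set V)) ≤ k ∧ s.card = n }

/-- `M_k`: the largest `t` such that every outerplanar graph with at most `t`
vertices has pathwidth at most `k`. -/
noncomputable def Mconst (k : ℕ) : ℕ :=
  sSup { t | ∀ (V : Type) (_ : Fintype V) (G : SimpleGraph V),
    Fintype.card V ≤ t → Outerplanar G → pathwidth G ≤ k }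

/-- A graph is 2-connected if it has at least 3 vertices and remains connected after the
deletion of any single vertex. -/
def TwoConnected {V : Type*} (G : SimpleGraph V) : Prop :=
  3 ≤ Nat.card V ∧ ∀ v : V, (G.induce {u | u ≠ v}).Connected


/-!
The witness is a ring of three triangulated octagons. An octagon whose four ears are triangles
has pathwidth at least 3: with bags of size at most 3, each ear is itself a bag, and the four ear
bags cannot be placed on a line since cyclically consecutive ears share a vertex that no other
ear contains. In a decomposition of the ring with bags of size at most 4, each octagon therefore
owns a bag inside it; the middle one of these three bags separates the other two, although the
other two octagons are joined by an arc of the Hamiltonian cycle avoiding the middle octagon.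

For outerplanarity, the vertices sit on a circle in the order of the Hamiltonian cycle and no two
edges cross as chords. A `K₄` or `K_{2,3}` minor would produce two disjoint connected sets with
interleaving points on the circle, and a path through each would have to cross.
-/

section PathDecomp

variable {V W : Type*} {G : SimpleGraph V} {m : ℕ} {X : Fin m → Finset V}

def PathwidthAtLeast (G : SimpleGraph V) (k : ℕ) : Prop :=
  ∀ (m : ℕ) (X : Fin m → Finset V), IsPathDecomp G m X → ∃ i, k < (X i).card

theorem PathwidthAtLeast.le_pathwidth [Fintype V] {k : ℕ} (h : PathwidthAtLeast G k) :
    k ≤ pathwidth G := by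
  refine le_csInf ⟨Fintype.card V, 1, fun _ => Finset.univ, ?_, fun _ => by simp⟩ ?_
  · exact ⟨fun v => ⟨0, Finset.mem_univ v⟩, fun u v _ => ⟨0, Finset.mem_univ u, Finset.mem_univ v⟩,
      fun _ _ _ _ _ v _ _ => Finset.mem_univ v⟩
  · rintro w ⟨m, X, hX, hbags⟩
    obtain ⟨i, hi⟩ := h m X hX
    have := hbags i
    omega

theorem IsPathDecomp.mem_of_between (hX : IsPathDecomp G m X) {v : V} {i j l : Fin m}
    (hi : v ∈ X i) (hl : v ∈ X l) (hj : i ≤ j ∧ j ≤ l ∨ l ≤ j ∧ j ≤ i) : v ∈ X j := by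
  rcases hj with ⟨hij, hjl⟩ | ⟨hlj, hji⟩
  · exact hX.2.2 i j l hij hjl v hi hl
  · exact hX.2.2 l j i hlj hji v hl hi

theorem IsPathDecomp.lt_or_lt_of_notMem (hX : IsPathDecomp G m X) {v : V} {i j l : Fin m}
    (hi : v ∈ X i) (hl : v ∈ X l) (hj : v ∉ X j) : j < i ∧ j < l ∨ i < j ∧ l < j := by
  by_contra h
  exact hj (hX.mem_of_between hi hl (by omega))

theorem IsPathDecomp.exists_bag_of_triangle (hX : IsPathDecomp G m X) {a b c : V}
    (hab : G.Adj a b) (hac : G.Adj a c) (hbc : G.Adj b c) :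
    ∃ i, a ∈ X i ∧ b ∈ X i ∧ c ∈ X i := by
  obtain ⟨i, hai, hbi⟩ := hX.2.1 _ _ hab
  obtain ⟨j, haj, hcj⟩ := hX.2.1 _ _ hac
  obtain ⟨l, hbl, hcl⟩ := hX.2.1 _ _ hbc
  by_cases hj : i ≤ j ∧ j ≤ l ∨ l ≤ j ∧ j ≤ i
  · exact ⟨j, haj, hX.mem_of_between hbi hbl hj, hcj⟩
  by_cases hi : j ≤ i ∧ i ≤ l ∨ l ≤ i ∧ i ≤ j
  · exact ⟨i, hai, hbi, hX.mem_of_between hcj hcl hi⟩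
  · exact ⟨l, hX.mem_of_between hai haj (by omega), hbl, hcl⟩

theorem IsPathDecomp.exists_mem_of_preconnected (hX : IsPathDecomp G m X) {C : Set V}
    (hC : (G.induce C).Preconnected) {i j l : Fin m} (hij : i ≤ j) (hjl : j ≤ l) {u w : V}
    (hu : u ∈ C) (hui : u ∈ X i) (hw : w ∈ C) (hwl : w ∈ X l) : ∃ z ∈ C, z ∈ X j := by
  by_contra! hCj
  obtain ⟨p⟩ := hC ⟨u, hu⟩ ⟨w, hw⟩
  obtain ⟨d, -, ⟨a, haj, ha⟩, hd⟩ := p.exists_boundary_dart {z | ∃ a ≤ j, ↑z ∈ X a}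
    ⟨i, hij, hui⟩ fun ⟨a, haj, ha⟩ => hCj w hw (hX.2.2 a j l haj hjl w ha hwl)
  obtain ⟨e, hde, hde'⟩ := hX.2.1 _ _ d.adj
  have hje : j < e := lt_of_not_ge fun hej => hd ⟨e, hej, hde'⟩
  exact hCj _ d.fst.2 (hX.2.2 a j e haj hje.le _ ha hde)

theorem IsPathDecomp.comap (hX : IsPathDecomp G m X) {H : SimpleGraph W} (f : H.Copy G) :
    IsPathDecomp H m fun i => (X i).preimage f f.injective.injOn := by
  refine ⟨fun v => ?_, fun u v huv => ?_, fun i j l hij hjl v hi hl => ?_⟩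
  · obtain ⟨i, hi⟩ := hX.1 (f v)
    exact ⟨i, Finset.mem_preimage.2 hi⟩
  · obtain ⟨i, hu, hv⟩ := hX.2.1 _ _ (f.toHom.map_adj huv)
    exact ⟨i, Finset.mem_preimage.2 hu, Finset.mem_preimage.2 hv⟩
  · rw [Finset.mem_preimage] at hi hl ⊢
    exact hX.2.2 i j l hij hjl _ hi hl

theorem PathwidthAtLeast.exists_bag_subset_range {H : SimpleGraph W} {k : ℕ}
    (hH : PathwidthAtLeast H k) (f : H.Copy G) (hX : IsPathDecomp G m X)
    (hsmall : ∀ i, (X i).card ≤ k + 1) : ∃ i, (X i).Nonempty ∧ ∀ v ∈ X i, v ∈ Set.range f := by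
  classical
  obtain ⟨i, hi⟩ := hH m _ (hX.comap f)
  rw [Finset.card_preimage] at hi
  have hfull : ((X i).filter (· ∈ Set.range f)).card = (X i).card :=
    le_antisymm (Finset.card_filter_le _ _) (by have := hsmall i; omega)
  exact ⟨i, Finset.card_pos.1 (by omega), fun v hv => Finset.filter_card_eq hfull v hv⟩

theorem exists_le_le_of_fin_three {α : Type*} [LinearOrder α] (b : Fin 3 → α) :
    ∃ i j l, j ≠ i ∧ j ≠ l ∧ b i ≤ b j ∧ b j ≤ b l :=
  let σ := Tuple.sort b
  ⟨σ 0, σ 1, σ 2, σ.injective.ne (by decide), σ.injective.ne (by decide),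
    Tuple.monotone_sort b (by decide), Tuple.monotone_sort b (by decide)⟩

theorem PathwidthAtLeast.succ_of_three {ι : Fin 3 → Type*} {H : ∀ j, SimpleGraph (ι j)} {k : ℕ}
    (hH : ∀ j, PathwidthAtLeast (H j) k) (f : ∀ j, (H j).Copy G) (C : Fin 3 → Set V)
    (hC : ∀ j, (G.induce (C j)).Preconnected) (hfC : ∀ j, Disjoint (Set.range (f j)) (C j))
    (hfC' : ∀ i j, i ≠ j → Set.range (f i) ⊆ C j) : PathwidthAtLeast G (k + 1) := by
  intro m X hX
  by_contra! hsmall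
  choose b hne hb using fun j => (hH j).exists_bag_subset_range (f j) hX hsmall
  obtain ⟨i, j, l, hji, hjl, hij, hjl'⟩ := exists_le_le_of_fin_three b
  obtain ⟨u, hu⟩ := hne i
  obtain ⟨w, hw⟩ := hne l
  obtain ⟨z, hzC, hz⟩ := hX.exists_mem_of_preconnected (hC j) hij hjl'
    (hfC' i j hji.symm (hb i u hu)) hu (hfC' l j hjl.symm (hb l w hw)) hw
  exact Set.disjoint_left.1 (hfC j) (hb j z hz) hzC

end PathDecomp

/-- The octagon `0, 1, …, 7` triangulated into the ears `012, 234, 456, 670` and the square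
`0246` with its diagonal `04`. -/
def octagon : SimpleGraph (Fin 8) :=
  fromRel fun x y => y = x + 1 ∨ (x, y) ∈ [(0, 2), (2, 4), (4, 6), (0, 4), (0, 6)]

instance : DecidableRel octagon.Adj := fun _ _ => inferInstanceAs (Decidable (_ ≠ _ ∧ (_ ∨ _)))

theorem pathwidthAtLeast_octagon : PathwidthAtLeast octagon 3 := by
  intro m X hX
  by_contra! hsmall
  have ear : ∀ x y z : Fin 8, octagon.Adj x y → octagon.Adj x z → octagon.Adj y z →
      ∃ i, X i = {x, y, z} := by
    intro x y z hxy hxz hyz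
    obtain ⟨i, hx, hy, hz⟩ := hX.exists_bag_of_triangle hxy hxz hyz
    refine ⟨i, (Finset.eq_of_subset_of_card_le ?_ ?_).symm⟩
    · simp [Finset.insert_subset_iff, hx, hy, hz]
    · rw [Finset.card_eq_three.2 ⟨x, y, z, hxy.ne, hxz.ne, hyz.ne, rfl⟩]
      exact hsmall i
  obtain ⟨a, ha⟩ := ear 0 1 2 (by decide) (by decide) (by decide)
  obtain ⟨b, hb⟩ := ear 2 3 4 (by decide) (by decide) (by decide)
  obtain ⟨c, hc⟩ := ear 4 5 6 (by decide) (by decide) (by decide)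
  obtain ⟨d, hd⟩ := ear 6 7 0 (by decide) (by decide) (by decide)
  have outside : ∀ (v : Fin 8) (i j l : Fin m), v ∈ X i → v ∈ X l → v ∉ X j →
      j < i ∧ j < l ∨ i < j ∧ l < j := fun _ _ _ _ => hX.lt_or_lt_of_notMem
  have := outside 0 a b d (by simp [ha]) (by simp [hd]) (by simp [hb])
  have := outside 0 a c d (by simp [ha]) (by simp [hd]) (by simp [hc])
  have := outside 2 a c b (by simp [ha]) (by simp [hb]) (by simp [hc])
  have := outside 2 a d b (by simp [ha]) (by simp [hb]) (by simp [hd])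
  have := outside 4 b a c (by simp [hb]) (by simp [hc]) (by simp [ha])
  have := outside 4 b d c (by simp [hb]) (by simp [hc]) (by simp [hd])
  have := outside 6 c a d (by simp [hc]) (by simp [hd]) (by simp [ha])
  have := outside 6 c b d (by simp [hc]) (by simp [hd]) (by simp [hb])
  omega

section Connectivity

variable {V : Type*} {G : SimpleGraph V}

theorem connected_induce_range_of_adj {l : ℕ} {g : Fin (l + 1) → V}
    (hg : ∀ i j : Fin (l + 1), i.val + 1 = j.val → G.Adj (g i) (g j)) :
    (G.induce (Set.range g)).Connected := by
  let φ : pathGraph (l + 1) →g G.induce (Set.range g) :=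
    { toFun := fun k => ⟨g k, k, rfl⟩
      map_rel' := fun {i j} h => by
        rcases pathGraph_adj.1 h with h | h
        · exact hg i j h
        · exact (hg j i h).symm }
  exact (pathGraph_connected l).map φ fun ⟨_, k, hk⟩ => ⟨k, Subtype.ext hk⟩

theorem connected_induce_arc {n : ℕ} {G : SimpleGraph (ZMod n)} (hcyc : ∀ u, G.Adj u (u + 1))
    (a : ZMod n) (l : ℕ) :
    (G.induce (Set.range fun k : Fin (l + 1) => a + ((k : ℕ) : ZMod n))).Connected :=
  connected_induce_range_of_adj fun i j hij => by
    convert hcyc (a + ((i : ℕ) : ZMod n)) using 1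
    rw [← hij]
    push_cast
    ring

theorem ZMod.setOf_ne_eq_range (l : ℕ) (v : ZMod (l + 2)) :
    {u | u ≠ v} = Set.range fun k : Fin (l + 1) => v + 1 + ((k : ℕ) : ZMod (l + 2)) := by
  ext u
  simp only [Set.mem_ofPred_eq, Set.mem_range]
  constructor
  · intro hu
    have hlt := ZMod.val_lt (u - (v + 1))
    have hne : (u - (v + 1)).val ≠ l + 1 := by
      intro h
      apply hu
      have h' := congrArg (fun k : ℕ => (k : ZMod (l + 2))) h
      simp only [ZMod.natCast_val, ZMod.cast_id', id] at h'
      have h2 : ((l + 2 : ℕ) : ZMod (l + 2)) = 0 := ZMod.natCast_self _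
      push_cast at h' h2
      linear_combination h' + h2
    exact ⟨⟨(u - (v + 1)).val, by omega⟩, by simp⟩
  · rintro ⟨k, rfl⟩ h
    have h0 : ((k + 1 : ℕ) : ZMod (l + 2)) = 0 := by
      push_cast
      linear_combination h
    have := Nat.le_of_dvd k.val.succ_pos ((ZMod.natCast_eq_zero_iff _ _).1 h0)
    omega

theorem twoConnected_of_adj_add_one {n : ℕ} (hn : 3 ≤ n) {G : SimpleGraph (ZMod n)}
    (hcyc : ∀ u, G.Adj u (u + 1)) : TwoConnected G := by
  obtain ⟨l, rfl⟩ : ∃ l, n = l + 2 := ⟨n - 2, by omega⟩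
  refine ⟨by simpa using hn, fun v => ?_⟩
  rw [ZMod.setOf_ne_eq_range]
  exact connected_induce_arc hcyc (v + 1) l

end Connectivity

section CircleDrawing

/-- With points of a circle labelled by `ℕ` in cyclic order, the chords `ab` and `xy` cross iff
exactly one of `x`, `y` lies strictly between `a` and `b`. -/
def ChordsCross (a b x y : ℕ) : Prop :=
  Xor (min a b < x ∧ x < max a b) (min a b < y ∧ y < max a b)

instance (a b x y : ℕ) : Decidable (ChordsCross a b x y) :=
  inferInstanceAs (Decidable ((_ ∧ ¬ _) ∨ (_ ∧ ¬ _)))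

theorem chordsCross_swap_left (a b x y : ℕ) : ChordsCross a b x y ↔ ChordsCross b a x y := by
  rw [ChordsCross, ChordsCross, min_comm, max_comm]

theorem chordsCross_swap_right (a b x y : ℕ) : ChordsCross a b x y ↔ ChordsCross a b y x := by
  rw [ChordsCross, ChordsCross, _root_.xor_comm]

theorem ChordsCross.symm {a b x y : ℕ} (h : ChordsCross a b x y) (hx : x ≠ a ∧ x ≠ b)
    (hy : y ≠ a ∧ y ≠ b) : ChordsCross x y a b := by
  unfold ChordsCross Xor at *
  omega

variable {V : Type*} {G : SimpleGraph V}

def SimpleGraph.IsCircleDrawing (G : SimpleGraph V) (p : V → ℕ) : Prop :=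
  Function.Injective p ∧ ∀ u v s t, G.Adj u v → G.Adj s t → s ≠ u → s ≠ v → t ≠ u → t ≠ v →
    ¬ ChordsCross (p u) (p v) (p s) (p t)

theorem exists_adj_chordsCross_of_preconnected (p : V → ℕ) {C : Set V}
    (hC : (G.induce C).Preconnected) {a b : ℕ} {x z : V} (hx : x ∈ C) (hz : z ∈ C)
    (h : ChordsCross a b (p x) (p z)) :
    ∃ u ∈ C, ∃ v ∈ C, G.Adj u v ∧ ChordsCross a b (p u) (p v) := by
  let S : Set C := {v | min a b < p v ∧ p v < max a b}
  have leave : ∀ x z : C, x ∈ S → z ∉ S →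
      ∃ u ∈ C, ∃ v ∈ C, G.Adj u v ∧ ChordsCross a b (p u) (p v) :=
    fun x z hx hz =>
      let ⟨q⟩ := hC x z
      let ⟨d, _, hd, hd'⟩ := q.exists_boundary_dart S hx hz
      ⟨d.fst, d.fst.2, d.snd, d.snd.2, d.adj, Or.inl ⟨hd, hd'⟩⟩
  rcases h with ⟨hxS, hzS⟩ | ⟨hzS, hxS⟩
  · exact leave ⟨x, hx⟩ ⟨z, hz⟩ hxS hzS
  · exact leave ⟨z, hz⟩ ⟨x, hx⟩ hzS hxS

theorem SimpleGraph.IsCircleDrawing.not_chordsCross {p : V → ℕ} (hp : G.IsCircleDrawing p)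
    {A B : Set V} (hAB : Disjoint A B) (hA : (G.induce A).Preconnected)
    (hB : (G.induce B).Preconnected) {x z y w : V} (hx : x ∈ A) (hz : z ∈ A) (hy : y ∈ B)
    (hw : w ∈ B) : ¬ ChordsCross (p y) (p w) (p x) (p z) := by
  intro h
  have hne : ∀ {s t}, s ∈ A → t ∈ B → p s ≠ p t := fun hs ht hst => hAB.ne_of_mem hs ht (hp.1 hst)
  obtain ⟨u, hu, v, hv, huv, huvyw⟩ := exists_adj_chordsCross_of_preconnected p hA hx hz h
  obtain ⟨s, hs, t, ht, hst, hstuv⟩ := exists_adj_chordsCross_of_preconnected p hB hy hw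
    (huvyw.symm ⟨hne hu hy, hne hu hw⟩ ⟨hne hv hy, hne hv hw⟩)
  exact hp.2 u v s t huv hst (hAB.ne_of_mem hu hs).symm (hAB.ne_of_mem hv hs).symm
    (hAB.ne_of_mem hu ht).symm (hAB.ne_of_mem hv ht).symm hstuv

theorem SimpleGraph.IsCircleDrawing.not_K4_minor {p : V → ℕ} (hp : G.IsCircleDrawing p) :
    ¬ (completeGraph (Fin 4)).IsMinorOf G := by
  rintro ⟨B, hconn, hdisj, hadj⟩
  choose r hr using fun i => nonempty_subtype.1 (hconn i).nonempty
  have hne : ∀ i j, i ≠ j → p (r i) ≠ p (r j) := fun i j hij h =>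
    (hdisj i j hij).ne_of_mem (hr i) (hr j) (hp.1 h)
  have pair : ∀ i j, i ≠ j → (G.induce (B i ∪ B j)).Preconnected := fun i j hij =>
    let ⟨_, hu, _, hv, huv⟩ := hadj i j hij
    (connected_induce_union (hconn i).preconnected (hconn j).preconnected hu hv huv).preconnected
  have key : ∀ i j k l : Fin 4, [i, j, k, l].Nodup →
      ¬ ChordsCross (p (r k)) (p (r l)) (p (r i)) (p (r j)) := by
    intro i j k l h
    simp only [List.nodup_cons, List.mem_cons, List.not_mem_nil, or_false, not_or] at h
    obtain ⟨⟨hij, hik, hil⟩, ⟨hjk, hjl⟩, hkl, -⟩ := h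
    refine hp.not_chordsCross ?_ (pair i j hij) (pair k l hkl) (.inl (hr i)) (.inr (hr j))
      (.inl (hr k)) (.inr (hr l))
    exact Set.disjoint_union_left.2 ⟨Set.disjoint_union_right.2 ⟨hdisj _ _ hik, hdisj _ _ hil⟩,
      Set.disjoint_union_right.2 ⟨hdisj _ _ hjk, hdisj _ _ hjl⟩⟩
  -- Of the three pairings of four points of a circle, one always gives crossing chords.
  have := key 0 1 2 3 (by decide)
  have := key 0 2 1 3 (by decide)
  have := key 0 3 1 2 (by decide)
  have := hne 0 1 (by decide)
  have := hne 0 2 (by decide)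
  have := hne 0 3 (by decide)
  have := hne 1 2 (by decide)
  have := hne 1 3 (by decide)
  have := hne 2 3 (by decide)
  unfold ChordsCross Xor at *
  omega

theorem SimpleGraph.IsCircleDrawing.not_K23_minor {p : V → ℕ} (hp : G.IsCircleDrawing p) :
    ¬ (completeBipartiteGraph (Fin 2) (Fin 3)).IsMinorOf G := by
  rintro ⟨B, hconn, hdisj, hadj⟩
  choose r hr using fun i => nonempty_subtype.1 (hconn i).nonempty
  have hne : ∀ i j, i ≠ j → p (r i) ≠ p (r j) := fun i j hij h =>
    (hdisj i j hij).ne_of_mem (hr i) (hr j) (hp.1 h)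
  have edge : ∀ a b, ∃ u ∈ B (.inl a), ∃ v ∈ B (.inr b), G.Adj u v := fun a b =>
    hadj _ _ (by simp)
  have key : ∀ i j l : Fin 3, i ≠ j → i ≠ l → j ≠ l →
      ¬ ChordsCross (p (r (.inl 1))) (p (r (.inr l))) (p (r (.inr i))) (p (r (.inr j))) := by
    intro i j l hij hil hjl
    obtain ⟨u, hu, v, hv, huv⟩ := edge 0 i
    obtain ⟨u', hu', v', hv', huv'⟩ := edge 0 j
    obtain ⟨u'', hu'', v'', hv'', huv''⟩ := edge 1 l
    have hA := connected_induce_union (connected_induce_union (hconn (.inr i)).preconnected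
      (hconn (.inl 0)).preconnected hv hu huv.symm).preconnected (hconn (.inr j)).preconnected
      (.inr hu') hv' huv'
    have hB := connected_induce_union (hconn (.inl 1)).preconnected (hconn (.inr l)).preconnected
      hu'' hv'' huv''
    refine hp.not_chordsCross ?_ hA.preconnected hB.preconnected (.inl (.inl (hr _)))
      (.inr (hr _)) (.inl (hr _)) (.inr (hr _))
    have sep : ∀ a, a ≠ .inl 1 → a ≠ .inr l → Disjoint (B a) (B (.inl 1) ∪ B (.inr l)) :=
      fun a h1 h2 => Set.disjoint_union_right.2 ⟨hdisj _ _ h1, hdisj _ _ h2⟩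
    exact Set.disjoint_union_left.2 ⟨Set.disjoint_union_left.2 ⟨sep _ (by simp) (by simpa),
      sep _ (by simp) (by simp)⟩, sep _ (by simp) (by simpa)⟩
  -- Whichever arc between the `b`-points contains `a₁`, the chord from `a₁` to the opposite
  -- `b`-point crosses the chord joining the other two.
  have := key 0 1 2 (by decide) (by decide) (by decide)
  have := key 0 2 1 (by decide) (by decide) (by decide)
  have := key 1 2 0 (by decide) (by decide) (by decide)
  have := hne (.inl 1) (.inr 0) (by decide)
  have := hne (.inl 1) (.inr 1) (by decide)
  have := hne (.inl 1) (.inr 2) (by decide)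
  have := hne (.inr 0) (.inr 1) (by decide)
  have := hne (.inr 0) (.inr 2) (by decide)
  have := hne (.inr 1) (.inr 2) (by decide)
  unfold ChordsCross Xor at *
  omega

theorem SimpleGraph.IsCircleDrawing.outerplanar {p : V → ℕ} (hp : G.IsCircleDrawing p) :
    Outerplanar G :=
  ⟨hp.not_K4_minor, hp.not_K23_minor⟩

end CircleDrawing

section OctagonRing

/-- The 24-cycle with, on each block `8j, …, 8j + 7`, the chords of a copy of `octagon`. -/
def octagonRingEdges : List (ZMod 24 × ZMod 24) :=
  (List.range 24).map (fun k => ((k : ZMod 24), (k + 1 : ZMod 24))) ++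
  [(0, 2), (2, 4), (4, 6), (0, 4), (0, 6), (0, 7),
   (8, 10), (10, 12), (12, 14), (8, 12), (8, 14), (8, 15),
   (16, 18), (18, 20), (20, 22), (16, 20), (16, 22), (16, 23)]

def octagonRing : SimpleGraph (ZMod 24) :=
  fromRel fun u v => (u, v) ∈ octagonRingEdges

instance : DecidableRel octagonRing.Adj :=
  fun _ _ => inferInstanceAs (Decidable (_ ≠ _ ∧ (_ ∨ _)))

theorem octagonRing_adj_add_one : ∀ u : ZMod 24, octagonRing.Adj u (u + 1) := by
  decide

set_option maxRecDepth 4000 in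
theorem isCircleDrawing_octagonRing : octagonRing.IsCircleDrawing ZMod.val := by
  have h : ∀ e ∈ octagonRingEdges, ∀ f ∈ octagonRingEdges,
      f.1 ≠ e.1 → f.1 ≠ e.2 → f.2 ≠ e.1 → f.2 ≠ e.2 →
      ¬ ChordsCross e.1.val e.2.val f.1.val f.2.val := by
    decide
  refine ⟨ZMod.val_injective 24, ?_⟩
  rintro u v s t ⟨-, huv | huv⟩ ⟨-, hst | hst⟩ h1 h2 h3 h4
  · exact h _ huv _ hst h1 h2 h3 h4
  · rw [chordsCross_swap_right]
    exact h _ huv _ hst h3 h4 h1 h2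
  · rw [chordsCross_swap_left]
    exact h _ huv _ hst h2 h1 h4 h3
  · rw [chordsCross_swap_left, chordsCross_swap_right]
    exact h _ huv _ hst h4 h3 h2 h1

def octagonBlock (j : Fin 3) : octagon.Copy octagonRing where
  toHom :=
    { toFun := fun x => ((8 * j + x : ℕ) : ZMod 24)
      map_rel' := fun {x y} => (by decide : ∀ j : Fin 3, ∀ x y : Fin 8, octagon.Adj x y →
        octagonRing.Adj ((8 * j + x : ℕ) : ZMod 24) ((8 * j + y : ℕ) : ZMod 24)) j x y }
  injective' := fun x y => (by decide : ∀ j : Fin 3, ∀ x y : Fin 8,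
    ((8 * j + x : ℕ) : ZMod 24) = ((8 * j + y : ℕ) : ZMod 24) → x = y) j x y

/-- The arc of the 24-cycle formed by the two blocks other than block `j`. -/
def octagonRingArc (j : Fin 3) : Set (ZMod 24) :=
  Set.range fun k : Fin 16 => ((8 * j + 8 : ℕ) : ZMod 24) + ((k : ℕ) : ZMod 24)

theorem pathwidthAtLeast_octagonRing : PathwidthAtLeast octagonRing 4 := by
  refine PathwidthAtLeast.succ_of_three (fun _ => pathwidthAtLeast_octagon) octagonBlock
    octagonRingArc (fun _ => (connected_induce_arc octagonRing_adj_add_one _ 15).preconnected)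
    (fun j => ?_) (fun i j hij => ?_)
  · rw [Set.disjoint_left]
    rintro _ ⟨x, rfl⟩ ⟨k, hk⟩
    exact (by decide : ∀ j : Fin 3, ∀ x : Fin 8, ∀ k : Fin 16,
      ((8 * j + 8 : ℕ) : ZMod 24) + ((k : ℕ) : ZMod 24) ≠ ((8 * j + x : ℕ) : ZMod 24)) j x k hk
  · rintro _ ⟨x, rfl⟩
    exact (by decide : ∀ i j : Fin 3, i ≠ j → ∀ x : Fin 8, ∃ k : Fin 16,
      ((8 * j + 8 : ℕ) : ZMod 24) + ((k : ℕ) : ZMod 24) = ((8 * i + x : ℕ) : ZMod 24)) i j hij x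

end OctagonRing

theorem Mconst_le_of_outerplanar {V : Type} [Fintype V] (G : SimpleGraph V) {k t : ℕ}
    (hcard : Fintype.card V ≤ t + 1) (hG : Outerplanar G) (hpw : k < pathwidth G) :
    Mconst k ≤ t :=
  csSup_le' fun s hs => by
    by_contra! hts
    exact (hs V inferInstance G (by omega) hG).not_gt hpw

/-- There is a 2-connected outerplanar graph with at most 24 vertices whose pathwidth is
at least 4; consequently `M₃ ≤ 23`. -/
theorem M3_le_twentythree :
    (∃ (V : Type) (_ : Fintype V) (G : SimpleGraph V),
      Fintype.card V ≤ 24 ∧ TwoConnected G ∧ Outerplanar G ∧ 4 ≤ pathwidth G) ∧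
    Mconst 3 ≤ 23 := by
  have hcard : Fintype.card (ZMod 24) ≤ 24 := (ZMod.card 24).le
  have hG : Outerplanar octagonRing := isCircleDrawing_octagonRing.outerplanar
  have hpw : 4 ≤ pathwidth octagonRing := pathwidthAtLeast_octagonRing.le_pathwidth
  exact ⟨⟨ZMod 24, inferInstance, octagonRing, hcard,
    twoConnected_of_adj_add_one (by norm_num) octagonRing_adj_add_one, hG, hpw⟩,
    Mconst_le_of_outerplanar octagonRing hcard hG hpw⟩
end

section
/- Every tree with pathwidth at least 3 has at least 22 vertices. -/
open SimpleGraph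

/-!
A tree on at most `3s + 3` vertices has a spine: a path `P` such that every component of the tree
minus `P` has at most `s` vertices. Take a longest path of heavy edges (edges both of whose sides
have more than `s` vertices): a heavy component hanging off it would either extend it or give a
vertex with three heavy sides. If there is no heavy edge at all, a centroid is a spine.

Along a spine `p₁, …, pₙ`, path-decompositions of width `k` of the components combine into one of
width `k + 1` of the tree: for each `pᵢ` in turn, those of the components hanging off `pᵢ` with
`pᵢ` added to every bag, followed by the bag `{pᵢ, pᵢ₊₁}`. Hence a tree on at most
`treeOrderBound k` vertices has pathwidth at most `k`, and `treeOrderBound 2 = 21`.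
-/

namespace SimpleGraph

open scoped Finset

variable {V : Type*} {G : SimpleGraph V}

section ReachableIn

def ReachableIn (G : SimpleGraph V) (S : Finset V) (u v : V) : Prop :=
  ∃ w : G.Walk u v, ∀ x ∈ w.support, x ∈ S

def PreconnectedIn (G : SimpleGraph V) (S : Finset V) : Prop :=
  ∀ u ∈ S, ∀ v ∈ S, G.ReachableIn S u v

open Classical in
noncomputable def componentIn (G : SimpleGraph V) (S : Finset V) (v : V) : Finset V :=
  S.filter (G.ReachableIn S v)

variable {S T C : Finset V} {u v w x : V}

namespace ReachableIn

theorem refl (h : v ∈ S) : G.ReachableIn S v v :=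
  ⟨.nil, by simpa⟩

theorem of_adj (hu : u ∈ S) (hv : v ∈ S) (h : G.Adj u v) : G.ReachableIn S u v :=
  ⟨h.toWalk, by simp [hu, hv]⟩

theorem left_mem (h : G.ReachableIn S u v) : u ∈ S :=
  h.elim fun w hw ↦ hw _ w.start_mem_support

theorem right_mem (h : G.ReachableIn S u v) : v ∈ S :=
  h.elim fun w hw ↦ hw _ w.end_mem_support

theorem symm (h : G.ReachableIn S u v) : G.ReachableIn S v u :=
  h.elim fun w hw ↦ ⟨w.reverse, by simpa using hw⟩

theorem trans (h : G.ReachableIn S u v) (h' : G.ReachableIn S v w) : G.ReachableIn S u w := by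
  obtain ⟨p, hp⟩ := h
  obtain ⟨q, hq⟩ := h'
  refine ⟨p.append q, fun x hx ↦ ?_⟩
  rcases Walk.mem_support_append_iff p q |>.1 hx with hx | hx
  exacts [hp x hx, hq x hx]

theorem mono (hST : S ⊆ T) (h : G.ReachableIn S u v) : G.ReachableIn T u v :=
  h.elim fun w hw ↦ ⟨w, fun x hx ↦ hST (hw x hx)⟩

theorem exists_isPath [DecidableEq V] (h : G.ReachableIn S u v) :
    ∃ w : G.Walk u v, w.IsPath ∧ ∀ x ∈ w.support, x ∈ S :=
  h.elim fun w hw ↦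
    ⟨w.bypass, w.bypass_isPath, fun x hx ↦ hw x (w.support_bypass_subset_support hx)⟩

end ReachableIn

theorem mem_componentIn : u ∈ G.componentIn S v ↔ G.ReachableIn S v u := by
  classical
  simpa [componentIn] using fun h ↦ h.right_mem

theorem componentIn_subset : G.componentIn S v ⊆ S :=
  fun _ hu ↦ (mem_componentIn.1 hu).right_mem

theorem mem_componentIn_self (h : v ∈ S) : v ∈ G.componentIn S v :=
  mem_componentIn.2 (.refl h)

theorem componentIn_eq_of_mem (h : u ∈ G.componentIn S v) :
    G.componentIn S u = G.componentIn S v := by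
  have huv := mem_componentIn.1 h
  ext x
  simp only [mem_componentIn]
  exact ⟨huv.trans, huv.symm.trans⟩

theorem disjoint_componentIn (h : u ∉ G.componentIn S v) :
    Disjoint (G.componentIn S u) (G.componentIn S v) := by
  refine Finset.disjoint_left.2 fun x hxu hxv ↦ h ?_
  exact mem_componentIn.2 ((mem_componentIn.1 hxv).trans (mem_componentIn.1 hxu).symm)

theorem mem_componentIn_of_adj (hu : u ∈ G.componentIn S v) (hw : w ∈ S) (h : G.Adj u w) :
    w ∈ G.componentIn S v :=
  mem_componentIn.2 ((mem_componentIn.1 hu).trans (.of_adj (componentIn_subset hu) hw h))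

theorem componentIn_mono (hST : S ⊆ T) : G.componentIn S v ⊆ G.componentIn T v :=
  fun _ hu ↦ mem_componentIn.2 ((mem_componentIn.1 hu).mono hST)

theorem componentIn_subset_of_closed (hv : v ∈ C)
    (hC : ∀ z ∈ C, ∀ w ∈ S, G.Adj z w → w ∈ C) : G.componentIn S v ⊆ C := by
  suffices ∀ {v y} (p : G.Walk v y), v ∈ C → (∀ x ∈ p.support, x ∈ S) → y ∈ C from
    fun y hy ↦ (mem_componentIn.1 hy).elim fun p hp ↦ this p hv hp
  intro v y p hv hp
  induction p with
  | nil => exact hv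
  | cons h p ih => exact ih (hC _ hv _ (hp _ (by simp)) h) fun x hx ↦ hp x (by simp [hx])

theorem componentIn_eq_of_subset (hST : S ⊆ T) (hv : v ∈ S) (h : G.componentIn T v ⊆ S) :
    G.componentIn S v = G.componentIn T v := by
  refine (componentIn_mono hST).antisymm (componentIn_subset_of_closed (mem_componentIn_self hv) ?_)
  intro z hz w hw hzw
  exact mem_componentIn_of_adj hz (h (mem_componentIn_of_adj (componentIn_mono hST hz) hw hzw)) hzw

theorem preconnectedIn_componentIn : G.PreconnectedIn (G.componentIn S v) := by
  intro u hu w hw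
  have hv : v ∈ S := (mem_componentIn.1 hu).left_mem
  have hsub : G.componentIn S v ⊆ G.componentIn (G.componentIn S v) v := by
    refine componentIn_subset_of_closed (mem_componentIn_self (mem_componentIn_self hv)) ?_
    intro z hz y hy hzy
    exact mem_componentIn_of_adj hz (mem_componentIn_of_adj (componentIn_subset hz) hy hzy) hzy
  exact (mem_componentIn.1 (hsub hu)).symm.trans (mem_componentIn.1 (hsub hw))

theorem preconnectedIn_toFinset [DecidableEq V] {l : List V} (hl : l.IsChain G.Adj) :
    G.PreconnectedIn l.toFinset := by
  suffices ∀ {a : V} {l : List V}, (a :: l).IsChain G.Adj →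
      ∀ x ∈ a :: l, G.ReachableIn (a :: l).toFinset a x by
    cases l with
    | nil => simp [PreconnectedIn]
    | cons a l => exact fun u hu w hw ↦
        (this hl u (by simpa using hu)).symm.trans (this hl w (by simpa using hw))
  intro a l hl x hx
  induction l generalizing a with
  | nil =>
    obtain rfl : x = a := by simpa using hx
    exact .refl (by simp)
  | cons b l ih =>
    rcases List.mem_cons.1 hx with rfl | hx
    · exact .refl (by simp)
    have hab := (List.isChain_cons_cons.1 hl).1
    refine (ReachableIn.of_adj (by simp) (by simp) hab).trans ?_
    exact (ih (List.isChain_cons_cons.1 hl).2 hx).mono fun y ↦ by simp; tauto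

theorem PreconnectedIn.exists_adj_of_mem_sdiff [DecidableEq V] {F : Finset V}
    (hS : G.PreconnectedIn S) (hFS : F ⊆ S) (ht : x ∈ F) (hc : v ∈ S \ F) :
    ∃ y ∈ G.componentIn (S \ F) v, ∃ p ∈ F, G.Adj y p := by
  by_contra! h
  have hsub : G.componentIn S v ⊆ G.componentIn (S \ F) v := by
    refine componentIn_subset_of_closed (mem_componentIn_self hc) fun z hz w hw hzw ↦ ?_
    exact mem_componentIn_of_adj hz (Finset.mem_sdiff.2 ⟨hw, fun hwF ↦ h z hz w hwF hzw⟩) hzw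
  have hx := componentIn_subset
    (hsub (mem_componentIn.2 (hS v (Finset.mem_sdiff.1 hc).1 x (hFS ht))))
  exact (Finset.mem_sdiff.1 hx).2 ht

theorem PreconnectedIn.mem_componentIn_erase_or [DecidableEq V] (hS : G.PreconnectedIn S)
    (hu : u ∈ S) (hv : v ∈ S) (huv : G.Adj u v) (hx : x ∈ S) :
    x ∈ G.componentIn (S.erase v) u ∨ x ∈ G.componentIn (S.erase u) v := by
  suffices G.componentIn S u ⊆ G.componentIn (S.erase v) u ∪ G.componentIn (S.erase u) v from
    Finset.mem_union.1 (this (mem_componentIn.2 (hS u hu x hx)))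
  refine componentIn_subset_of_closed
    (Finset.mem_union_left _ (mem_componentIn_self (Finset.mem_erase.2 ⟨huv.ne, hu⟩))) ?_
  intro z hz w hw hzw
  by_cases hwv : w = v
  · subst hwv
    exact Finset.mem_union_right _ (mem_componentIn_self (Finset.mem_erase.2 ⟨huv.ne', hv⟩))
  by_cases hwu : w = u
  · subst hwu
    exact Finset.mem_union_left _ (mem_componentIn_self (Finset.mem_erase.2 ⟨huv.ne, hu⟩))
  rcases Finset.mem_union.1 hz with hz | hz
  · exact Finset.mem_union_left _
      (mem_componentIn_of_adj hz (Finset.mem_erase.2 ⟨hwv, hw⟩) hzw)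
  · exact Finset.mem_union_right _
      (mem_componentIn_of_adj hz (Finset.mem_erase.2 ⟨hwu, hw⟩) hzw)

end ReachableIn

section Acyclic

variable [DecidableEq V] {S : Finset V} {s : ℕ} {a b p x y : V}

/-- Two disjoint connected vertex sets of a forest are joined by at most one edge. -/
theorem IsAcyclic.eq_of_adj_of_reachableIn (hG : G.IsAcyclic) {A B : Finset V}
    {a₁ a₂ b₁ b₂ : V} (hAB : Disjoint A B) (hA : G.ReachableIn A a₁ a₂)
    (hB : G.ReachableIn B b₁ b₂) (h₁ : G.Adj a₁ b₁) (h₂ : G.Adj a₂ b₂) :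
    b₁ = b₂ := by
  by_contra hne
  obtain ⟨q, hq, hqA⟩ := hA.exists_isPath
  obtain ⟨r, hr, hrB⟩ := hB.exists_isPath
  have hb₂ : b₂ ∉ q.support := fun h ↦ Finset.disjoint_left.1 hAB (hqA _ h) hB.right_mem
  have hb₁ : b₁ ∉ (q.concat h₂).support := by
    rw [Walk.support_concat, List.mem_append, List.mem_singleton]
    rintro (h | h)
    exacts [Finset.disjoint_left.1 hAB (hqA _ h) hB.left_mem, hne h]
  have hpath : (Walk.cons h₁.symm (q.concat h₂)).IsPath :=
    (Walk.cons_isPath_iff _ _).2 ⟨hq.concat hb₂ h₂, hb₁⟩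
  have hr_eq : Walk.cons h₁.symm (q.concat h₂) = r :=
    congrArg Subtype.val ((hG.subsingleton_path _ _).elim ⟨_, hpath⟩ ⟨r, hr⟩)
  have ha₁ : a₁ ∈ r.support := hr_eq ▸ by simp
  exact Finset.disjoint_left.1 hAB hA.left_mem (hrB _ ha₁)

theorem IsAcyclic.eq_of_adj_of_mem_componentIn (hG : G.IsAcyclic) (hp : p ∉ S)
    (hy : y ∈ G.componentIn S x) (hx : G.Adj p x) (hy' : G.Adj p y) : x = y :=
  hG.eq_of_adj_of_reachableIn (Finset.disjoint_singleton_left.2 hp) (.refl (by simp))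
    (mem_componentIn.1 hy) hx hy'

theorem lt_card_of_three_disjoint {C₁ C₂ C₃ : Finset V} (hp : p ∈ S)
    (h₁ : C₁ ⊆ S.erase p) (h₂ : C₂ ⊆ S.erase p) (h₃ : C₃ ⊆ S.erase p)
    (h₁₂ : Disjoint C₁ C₂) (h₁₃ : Disjoint C₁ C₃) (h₂₃ : Disjoint C₂ C₃)
    (hs₁ : s < #C₁) (hs₂ : s < #C₂) (hs₃ : s < #C₃) : 3 * s + 3 < #S := by
  have hle := Finset.card_le_card (Finset.union_subset (Finset.union_subset h₁ h₂) h₃)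
  rw [Finset.card_union_of_disjoint (Finset.disjoint_union_left.2 ⟨h₁₃, h₂₃⟩),
    Finset.card_union_of_disjoint h₁₂, Finset.card_erase_of_mem hp] at hle
  omega

theorem IsAcyclic.lt_card_of_three_heavy_neighbours (hG : G.IsAcyclic) (hp : p ∈ S) {c : V}
    (hab : a ≠ b) (hac : a ≠ c) (hbc : b ≠ c)
    (ha : G.Adj p a) (hb : G.Adj p b) (hc : G.Adj p c)
    (hsa : s < #(G.componentIn (S.erase p) a)) (hsb : s < #(G.componentIn (S.erase p) b))
    (hsc : s < #(G.componentIn (S.erase p) c)) : 3 * s + 3 < #S := by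
  have hdisj : ∀ {u v}, u ≠ v → G.Adj p u → G.Adj p v →
      Disjoint (G.componentIn (S.erase p) u) (G.componentIn (S.erase p) v) :=
    fun huv hu hv ↦ disjoint_componentIn fun h ↦
      huv (hG.eq_of_adj_of_mem_componentIn (by simp) h hv hu).symm
  exact lt_card_of_three_disjoint hp componentIn_subset componentIn_subset componentIn_subset
    (hdisj hab ha hb) (hdisj hac ha hc) (hdisj hbc hb hc) hsa hsb hsc

end Acyclic

section HeavyPath

variable [DecidableEq V] {S : Finset V} {s : ℕ} {a b c p t x : V}

variable (G) in
/-- `G.componentIn (S.erase v) u` is the side of the edge `uv` that contains `u`. -/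
structure IsHeavyEdge (S : Finset V) (s : ℕ) (u v : V) : Prop where
  adj : G.Adj u v
  left_mem : u ∈ S
  right_mem : v ∈ S
  lt_card_left : s < #(G.componentIn (S.erase v) u)
  lt_card_right : s < #(G.componentIn (S.erase u) v)

theorem IsHeavyEdge.symm (h : G.IsHeavyEdge S s a b) : G.IsHeavyEdge S s b a :=
  ⟨h.adj.symm, h.right_mem, h.left_mem, h.lt_card_right, h.lt_card_left⟩

theorem IsHeavyEdge.of_adj (hap : G.IsHeavyEdge S s a p) (hx : x ∈ S) (hpx : G.Adj p x)
    (hxa : x ∉ G.componentIn (S.erase p) a) (hsx : s < #(G.componentIn (S.erase p) x)) :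
    G.IsHeavyEdge S s p x where
  adj := hpx
  left_mem := hap.right_mem
  right_mem := hx
  lt_card_right := hsx
  lt_card_left := by
    have haS : a ∈ S.erase p := Finset.mem_erase.2 ⟨hap.adj.ne, hap.left_mem⟩
    have hax : a ≠ x := fun h ↦ hxa (h ▸ mem_componentIn_self haS)
    have hsub : G.componentIn (S.erase p) a ⊆ G.componentIn (S.erase x) p := by
      rw [← componentIn_eq_of_subset (Finset.erase_subset x _) (Finset.mem_erase.2 ⟨hax, haS⟩)
        fun z hz ↦ Finset.mem_erase.2 ⟨fun h ↦ hxa (h ▸ hz), componentIn_subset hz⟩,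
        ← componentIn_eq_of_mem (mem_componentIn.2
          (.of_adj (Finset.mem_erase.2 ⟨hpx.ne, hap.right_mem⟩)
            (Finset.mem_erase.2 ⟨hax, hap.left_mem⟩) hap.adj.symm))]
      exact componentIn_mono (Finset.erase_subset_erase x (Finset.erase_subset p S))
    exact hap.lt_card_left.trans_le (Finset.card_le_card hsub)

variable (G) in
structure IsHeavyPath (S : Finset V) (s : ℕ) (P : List V) : Prop where
  nodup : P.Nodup
  subset : ∀ x ∈ P, x ∈ S
  chain : P.IsChain (G.IsHeavyEdge S s)

variable {P : List V}

theorem IsHeavyPath.length_le (h : G.IsHeavyPath S s P) : P.length ≤ #S := by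
  rw [← List.toFinset_card_of_nodup h.nodup]
  exact Finset.card_le_card fun x hx ↦ h.subset x (List.mem_toFinset.1 hx)

theorem IsHeavyPath.reverse (h : G.IsHeavyPath S s P) : G.IsHeavyPath S s P.reverse :=
  ⟨List.nodup_reverse.2 h.nodup, by simpa using h.subset,
    List.isChain_reverse.2 (h.chain.imp fun _ _ h ↦ h.symm)⟩

theorem IsHeavyPath.cons_of_adj (hP : G.IsHeavyPath S s (p :: b :: P)) (hx : x ∈ S)
    (hxP : x ∉ p :: b :: P) (hpx : G.Adj p x) (hxb : x ∉ G.componentIn (S.erase p) b)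
    (hsx : s < #(G.componentIn (S.erase p) x)) : G.IsHeavyPath S s (x :: p :: b :: P) where
  nodup := List.nodup_cons.2 ⟨hxP, hP.nodup⟩
  subset := by simpa [hx] using hP.subset
  chain := List.isChain_cons_cons.2
    ⟨((List.isChain_cons_cons.1 hP.chain).1.symm.of_adj hx hpx hxb hsx).symm, hP.chain⟩

theorem exists_isHeavyPath_forall_length_le (h : ∃ P, G.IsHeavyPath S s P) :
    ∃ P, G.IsHeavyPath S s P ∧ ∀ Q, G.IsHeavyPath S s Q → Q.length ≤ P.length := by
  classical
  obtain ⟨P₀, hP₀⟩ := h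
  obtain ⟨P, hP, hn⟩ := Nat.findGreatest_spec (P := fun n ↦ ∃ P, G.IsHeavyPath S s P ∧
    P.length = n) hP₀.length_le ⟨P₀, hP₀, rfl⟩
  exact ⟨P, hP, fun Q hQ ↦ hn ▸ Nat.le_findGreatest hQ.length_le ⟨Q, hQ, rfl⟩⟩

theorem IsAcyclic.exists_componentIn_erase_eq (hG : G.IsAcyclic) {F : Finset V}
    (hS : G.PreconnectedIn S) (hF : G.PreconnectedIn F) (hFS : F ⊆ S) (ht : t ∈ F)
    (hc : c ∈ S \ F) : ∃ p ∈ F, ∃ x ∈ G.componentIn (S \ F) c, G.Adj p x ∧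
      G.componentIn (S.erase p) x = G.componentIn (S \ F) c := by
  obtain ⟨x, hxC, p, hpF, hxp⟩ := hS.exists_adj_of_mem_sdiff hFS ht hc
  have huniq : ∀ y ∈ G.componentIn (S \ F) c, ∀ q ∈ F, G.Adj y q → q = p :=
    fun y hy q hq hyq ↦ hG.eq_of_adj_of_reachableIn
      (Finset.disjoint_of_subset_left componentIn_subset Finset.sdiff_disjoint)
      (preconnectedIn_componentIn y hy x hxC) (hF q hq p hpF) hyq hxp
  refine ⟨p, hpF, x, hxC, hxp.symm, ?_⟩
  refine (componentIn_subset_of_closed hxC fun z hz w hw hzw ↦ ?_).antisymm ?_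
  · have hwF : w ∉ F := fun hwF ↦ (Finset.mem_erase.1 hw).1 (huniq z hz w hwF hzw)
    exact mem_componentIn_of_adj hz (Finset.mem_sdiff.2 ⟨(Finset.mem_erase.1 hw).2, hwF⟩) hzw
  · rw [← componentIn_eq_of_mem hxC]
    exact componentIn_mono fun z hz ↦ Finset.mem_erase.2
      ⟨fun h ↦ (Finset.mem_sdiff.1 hz).2 (h ▸ hpF), (Finset.mem_sdiff.1 hz).1⟩

theorem IsAcyclic.card_componentIn_le_of_isHeavyPath (hG : G.IsAcyclic)
    (hS : G.PreconnectedIn S) (hcard : #S ≤ 3 * s + 3) (hP : G.IsHeavyPath S s P)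
    (hlen : 2 ≤ P.length) (hmax : ∀ Q, G.IsHeavyPath S s Q → Q.length ≤ P.length) :
    ∀ c ∈ S \ P.toFinset, #(G.componentIn (S \ P.toFinset) c) ≤ s := by
  intro c hc
  by_contra! hheavy
  obtain ⟨p₀, hp₀⟩ : P.toFinset.Nonempty := by
    cases P <;> simp_all
  obtain ⟨p, hpP, x, hxC, hpx, hCp⟩ := hG.exists_componentIn_erase_eq hS
    (preconnectedIn_toFinset (hP.chain.imp fun _ _ h ↦ h.adj))
    (fun y hy ↦ hP.subset y (List.mem_toFinset.1 hy)) hp₀ hc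
  have hsx : s < #(G.componentIn (S.erase p) x) := hCp ▸ hheavy
  have hxS : x ∈ S := (Finset.mem_sdiff.1 (componentIn_subset hxC)).1
  have hxP : x ∉ P := fun h ↦
    (Finset.mem_sdiff.1 (componentIn_subset hxC)).2 (List.mem_toFinset.2 h)
  have hside : ∀ q ∈ P, x ∉ G.componentIn (S.erase p) q := fun q hq h ↦ by
    have hqC := hCp ▸ mem_componentIn.2 (mem_componentIn.1 h).symm
    exact (Finset.mem_sdiff.1 (componentIn_subset hqC)).2 (List.mem_toFinset.2 hq)
  -- `p` cannot be an end of `P`, as `px` would extend it, nor an interior vertex, as then the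
  -- sides of `p` towards its two path neighbours and towards `x` would all be heavy
  obtain ⟨P₁, P₂, rfl⟩ := List.append_of_mem (List.mem_toFinset.1 hpP)
  rcases P₁.eq_nil_or_concat with rfl | ⟨P₁, a, rfl⟩ <;> rcases P₂ with _ | ⟨b, P₂⟩
  · simp at hlen
  · have := hmax _ (hP.cons_of_adj hxS hxP hpx (hside b (by simp)) hsx)
    simp at this
  · have hR : G.IsHeavyPath S s (p :: a :: P₁.reverse) := by simpa using hP.reverse
    have := hmax _ (hR.cons_of_adj hxS (by simp at hxP ⊢; tauto) hpx (hside a (by simp)) hsx)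
    simp at this
  · simp only [List.concat_eq_append, List.append_assoc, List.cons_append, List.nil_append]
      at hP hxP
    have hchain := List.isChain_iff_forall_rel_of_append_cons_cons.1 hP.chain
    have hap : G.IsHeavyEdge S s a p := hchain (l₁ := P₁) (l₂ := b :: P₂) rfl
    have hpb : G.IsHeavyEdge S s p b := hchain (l₁ := P₁ ++ [a]) (l₂ := P₂) (by simp)
    have hab : a ≠ b := by
      have := hP.nodup
      simp [List.nodup_append] at this
      tauto
    have := hG.lt_card_of_three_heavy_neighbours hap.right_mem hab (fun h ↦ hxP (by simp [h]))
      (fun h ↦ hxP (by simp [h])) hap.adj.symm hpb.adj hpx hap.lt_card_left hpb.lt_card_right hsx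
    omega

theorem PreconnectedIn.exists_forall_card_componentIn_erase_le (hS : G.PreconnectedIn S)
    (hne : S.Nonempty) (hlight : ∀ u v, ¬ G.IsHeavyEdge S s u v) :
    ∃ v ∈ S, ∀ c ∈ S.erase v, #(G.componentIn (S.erase v) c) ≤ s := by
  let f v := (S.erase v).sup fun c ↦ #(G.componentIn (S.erase v) c)
  obtain ⟨v, hv, hmin⟩ := S.exists_min_image f hne
  refine ⟨v, hv, fun c hc ↦ ?_⟩
  by_contra! hheavy
  set C := G.componentIn (S.erase v) c
  obtain ⟨x, hxC, v', hv', hxv⟩ := hS.exists_adj_of_mem_sdiff (F := {v}) (v := c) (by simpa)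
    (Finset.mem_singleton_self v) (by simpa [Finset.sdiff_singleton_eq_erase] using hc)
  rw [Finset.sdiff_singleton_eq_erase] at hxC
  obtain rfl : v' = v := Finset.mem_singleton.1 hv'
  have hCx : G.componentIn (S.erase v') x = C := componentIn_eq_of_mem hxC
  have hxS : x ∈ S := (Finset.mem_erase.1 (componentIn_subset hxC)).2
  -- `v'x` is not heavy, so the side of `v'` is light and every component of `S.erase x` is
  -- smaller than `C`
  have hD : #(G.componentIn (S.erase x) v') ≤ s := by
    by_contra! h
    exact hlight v' x ⟨hxv.symm, hv, hxS, h, hCx ▸ hheavy⟩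
  have hfx : f x < #C := by
    refine (Finset.sup_lt_iff (Nat.zero_lt_of_lt hheavy)).2 fun y hy ↦ ?_
    by_cases hyD : y ∈ G.componentIn (S.erase x) v'
    · rw [componentIn_eq_of_mem hyD]
      omega
    have hsub : G.componentIn (S.erase x) y ⊆ C.erase x := fun z hz ↦ by
      have hzS := Finset.mem_erase.1 (componentIn_subset hz)
      rcases hS.mem_componentIn_erase_or hv hxS hxv.symm hzS.2 with hzD | hzC
      · exact absurd
          (mem_componentIn.2 ((mem_componentIn.1 hzD).trans (mem_componentIn.1 hz).symm)) hyD
      · exact Finset.mem_erase.2 ⟨hzS.1, hCx ▸ hzC⟩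
    calc #(G.componentIn (S.erase x) y) ≤ #(C.erase x) := Finset.card_le_card hsub
      _ < #C := Finset.card_erase_lt_of_mem (hCx ▸ mem_componentIn_self (componentIn_subset hxC))
  exact (hmin x hxS).not_gt
    (hfx.trans_le (Finset.le_sup (f := fun c ↦ #(G.componentIn (S.erase v') c)) hc))

end HeavyPath

section Spine

variable [DecidableEq V] {S : Finset V} {s a : ℕ} {p q : V} {P : List V}

variable (G) in
structure IsSpine (S : Finset V) (a : ℕ) (P : List V) : Prop where
  ne_nil : P ≠ []
  nodup : P.Nodup
  chain : P.IsChain G.Adj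
  subset : ∀ x ∈ P, x ∈ S
  card_componentIn_le : ∀ c ∈ S \ P.toFinset, #(G.componentIn (S \ P.toFinset) c) ≤ a

theorem IsAcyclic.exists_isSpine (hG : G.IsAcyclic) (hS : G.PreconnectedIn S) (hne : S.Nonempty)
    (hcard : #S ≤ 3 * s + 3) : ∃ P, G.IsSpine S s P := by
  by_cases hheavy : ∃ u v, G.IsHeavyEdge S s u v
  · obtain ⟨u, v, huv⟩ := hheavy
    have huvP : G.IsHeavyPath S s [u, v] :=
      ⟨by simp [huv.adj.ne], by simp [huv.left_mem, huv.right_mem], List.isChain_pair.2 huv⟩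
    obtain ⟨P, hP, hmax⟩ := exists_isHeavyPath_forall_length_le ⟨_, huvP⟩
    have hlen : 2 ≤ P.length := hmax _ huvP
    exact ⟨P, by rintro rfl; simp at hlen, hP.nodup, hP.chain.imp fun _ _ h ↦ h.adj, hP.subset,
      hG.card_componentIn_le_of_isHeavyPath hS hcard hP hlen hmax⟩
  · simp only [not_exists] at hheavy
    obtain ⟨v, hv, hlight⟩ := hS.exists_forall_card_componentIn_erase_le hne hheavy
    refine ⟨[v], by simp, by simp, List.isChain_singleton v, by simpa, ?_⟩
    simpa [Finset.sdiff_singleton_eq_erase] using hlight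

theorem IsSpine.tail (hP : G.IsSpine S a (p :: q :: P)) :
    G.IsSpine (G.componentIn (S.erase p) q) a (q :: P) where
  ne_nil := by simp
  nodup := hP.nodup.of_cons
  chain := hP.chain.tail
  subset x hx := by
    have hsub : (q :: P).toFinset ⊆ S.erase p := fun y hy ↦ Finset.mem_erase.2
      ⟨fun h ↦ (List.nodup_cons.1 hP.nodup).1 (h ▸ List.mem_toFinset.1 hy),
        hP.subset y (List.mem_cons_of_mem _ (List.mem_toFinset.1 hy))⟩
    exact mem_componentIn.2 ((preconnectedIn_toFinset hP.chain.tail q (by simp) x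
      (List.mem_toFinset.2 hx)).mono hsub)
  card_componentIn_le c hc := by
    set R := G.componentIn (S.erase p) q
    have hR : R ⊆ S.erase p := componentIn_subset
    have hcS : c ∈ S \ (p :: q :: P).toFinset := by
      have := Finset.mem_sdiff.1 hc
      simpa [(Finset.mem_erase.1 (hR this.1)).1, (Finset.mem_erase.1 (hR this.1)).2] using this.2
    rw [componentIn_eq_of_subset (T := S \ (p :: q :: P).toFinset)
      (fun z hz ↦ by grind [List.mem_toFinset]) hc ?_]
    · exact hP.card_componentIn_le c hcS
    intro z hz
    have hzR : z ∈ R := mem_componentIn.2 ((mem_componentIn.1 (Finset.mem_sdiff.1 hc).1).trans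
      ((mem_componentIn.1 hz).mono fun y hy ↦ by grind [List.mem_toFinset]))
    grind [List.mem_toFinset, componentIn_subset]

theorem IsSpine.card_componentIn_erase_sdiff_le (hP : G.IsSpine S a (p :: q :: P)) :
    ∀ c ∈ (S \ G.componentIn (S.erase p) q).erase p,
      #(G.componentIn ((S \ G.componentIn (S.erase p) q).erase p) c) ≤ a := by
  set R := G.componentIn (S.erase p) q
  have hPR := hP.tail.subset
  intro c hc
  have hcS : c ∈ S \ (p :: q :: P).toFinset := by
    grind [List.mem_toFinset]
  rw [componentIn_eq_of_subset (T := S \ (p :: q :: P).toFinset)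
    (fun z hz ↦ by grind [List.mem_toFinset]) hc ?_]
  · exact hP.card_componentIn_le c hcS
  intro z hz
  have hzR : z ∉ R := fun hzR ↦ (Finset.mem_sdiff.1 (Finset.mem_erase.1 hc).2).2
    (mem_componentIn.2 ((mem_componentIn.1 hzR).trans
      ((mem_componentIn.1 hz).mono fun y hy ↦ by grind [List.mem_toFinset]).symm))
  grind [List.mem_toFinset, componentIn_subset]

end Spine

section PathDecompList

variable {L M : List (Finset V)} {S R : Finset V} {k : ℕ} {p q v : V}

def BagsPrefix (L : List (Finset V)) (v : V) : Prop :=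
  ∃ L₁ L₂, L = L₁ ++ L₂ ∧ (∀ B ∈ L₁, v ∈ B) ∧ ∀ B ∈ L₂, v ∉ B

def BagsConsecutive (L : List (Finset V)) (v : V) : Prop :=
  ∃ L₀ L₁, L = L₀ ++ L₁ ∧ (∀ B ∈ L₀, v ∉ B) ∧ BagsPrefix L₁ v

theorem BagsPrefix.bagsConsecutive (h : BagsPrefix L v) : BagsConsecutive L v :=
  ⟨[], L, rfl, by simp, h⟩

theorem bagsPrefix_of_forall_mem (h : ∀ B ∈ L, v ∈ B) : BagsPrefix L v :=
  ⟨L, [], by simp, h, by simp⟩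

theorem bagsConsecutive_of_forall_not_mem (h : ∀ B ∈ L, v ∉ B) : BagsConsecutive L v :=
  ⟨L, [], by simp, h, [], [], rfl, by simp, by simp⟩

theorem BagsPrefix.append (h : BagsPrefix L v) (hM : ∀ B ∈ M, v ∉ B) :
    BagsPrefix (L ++ M) v := by
  obtain ⟨L₁, L₂, rfl, h₁, h₂⟩ := h
  refine ⟨L₁, L₂ ++ M, by simp, h₁, fun B hB ↦ ?_⟩
  rcases List.mem_append.1 hB with hB | hB
  exacts [h₂ B hB, hM B hB]

theorem BagsConsecutive.append (h : BagsConsecutive L v) (hM : ∀ B ∈ M, v ∉ B) :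
    BagsConsecutive (L ++ M) v := by
  obtain ⟨L₀, L₁, rfl, h₀, h₁⟩ := h
  exact ⟨L₀, L₁ ++ M, by simp, h₀, h₁.append hM⟩

theorem BagsConsecutive.append_left (hM : ∀ B ∈ M, v ∉ B) (h : BagsConsecutive L v) :
    BagsConsecutive (M ++ L) v := by
  obtain ⟨L₀, L₁, rfl, h₀, h₁⟩ := h
  refine ⟨M ++ L₀, L₁, by simp, fun B hB ↦ ?_, h₁⟩
  rcases List.mem_append.1 hB with hB | hB
  exacts [hM B hB, h₀ B hB]

theorem BagsConsecutive.mem_getElem (h : BagsConsecutive L v) {i j l : ℕ} (hij : i ≤ j)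
    (hjl : j ≤ l) (hl : l < L.length) (hi : v ∈ L[i]) (hl' : v ∈ L[l]) :
    v ∈ L[j] := by
  obtain ⟨L₀, L₁, rfl, h₀, L₂, L₃, rfl, h₂, h₃⟩ := h
  have key : ∀ n (hn : n < (L₀ ++ (L₂ ++ L₃)).length), v ∈ (L₀ ++ (L₂ ++ L₃))[n] ↔
      L₀.length ≤ n ∧ n < L₀.length + L₂.length := by
    intro n hn
    simp only [List.getElem_append]
    simp only [List.length_append] at hn
    split_ifs with h₁ h₂'
    · exact iff_of_false (h₀ _ (List.getElem_mem _)) (by omega)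
    · exact iff_of_true (h₂ _ (List.getElem_mem _)) (by omega)
    · exact iff_of_false (h₃ _ (List.getElem_mem _)) (by omega)
  rw [key] at hi hl' ⊢
  omega

variable (G) in
/-- Path-decompositions of `G[S]` as lists of bags, which concatenate more easily than the
`Fin`-indexed ones of `IsPathDecomp`. -/
structure IsPathDecompList (S : Finset V) (k : ℕ) (L : List (Finset V)) : Prop where
  subset : ∀ B ∈ L, B ⊆ S
  cover : ∀ v ∈ S, ∃ B ∈ L, v ∈ B
  adj : ∀ u ∈ S, ∀ v ∈ S, G.Adj u v → ∃ B ∈ L, u ∈ B ∧ v ∈ B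
  consecutive : ∀ v, BagsConsecutive L v
  card_le : ∀ B ∈ L, #B ≤ k + 1

theorem isPathDecompList_singleton (h : #S ≤ k + 1) : G.IsPathDecompList S k [S] where
  subset := by simp
  cover := by simp
  adj u hu v hv _ := ⟨S, by simp, hu, hv⟩
  consecutive v := by
    by_cases hv : v ∈ S
    exacts [(bagsPrefix_of_forall_mem (by simpa)).bagsConsecutive,
      bagsConsecutive_of_forall_not_mem (by simpa)]
  card_le := by simpa

theorem IsPathDecompList.pathwidth_le [Fintype V]
    (h : G.IsPathDecompList Finset.univ k L) : pathwidth G ≤ k := by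
  refine Nat.sInf_le ⟨L.length, fun i ↦ L[i], ⟨fun v ↦ ?_, fun u v huv ↦ ?_, ?_⟩,
    fun i ↦ h.card_le _ (List.getElem_mem _)⟩
  · obtain ⟨B, hB, hvB⟩ := h.cover v (Finset.mem_univ v)
    obtain ⟨i, hi, rfl⟩ := List.getElem_of_mem hB
    exact ⟨⟨i, hi⟩, hvB⟩
  · obtain ⟨B, hB, huB, hvB⟩ := h.adj u (Finset.mem_univ u) v (Finset.mem_univ v) huv
    obtain ⟨i, hi, rfl⟩ := List.getElem_of_mem hB
    exact ⟨⟨i, hi⟩, huB, hvB⟩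
  · exact fun i j l hij hjl v hi hl ↦ (h.consecutive v).mem_getElem hij hjl l.2 hi hl

variable [DecidableEq V]

theorem BagsConsecutive.map_insert (h : BagsConsecutive L v) (hv : v ≠ p) :
    BagsConsecutive (L.map (insert p)) v := by
  obtain ⟨L₀, L₁, rfl, h₀, L₂, L₃, rfl, h₂, h₃⟩ := h
  refine ⟨L₀.map (insert p), (L₂ ++ L₃).map (insert p), by simp, ?_,
    L₂.map (insert p), L₃.map (insert p), by simp, ?_, ?_⟩ <;> simp_all

theorem IsPathDecompList.append (hL : G.IsPathDecompList S k L) (hM : G.IsPathDecompList R k M)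
    (hSR : Disjoint S R) (hadj : ∀ u ∈ S, ∀ v ∈ R, ¬ G.Adj u v) :
    G.IsPathDecompList (S ∪ R) k (L ++ M) where
  subset B hB := by
    rcases List.mem_append.1 hB with hB | hB
    exacts [(hL.subset B hB).trans Finset.subset_union_left,
      (hM.subset B hB).trans Finset.subset_union_right]
  cover v hv := by
    rcases Finset.mem_union.1 hv with hv | hv
    · obtain ⟨B, hB, hvB⟩ := hL.cover v hv
      exact ⟨B, List.mem_append_left _ hB, hvB⟩
    · obtain ⟨B, hB, hvB⟩ := hM.cover v hv
      exact ⟨B, List.mem_append_right _ hB, hvB⟩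
  adj u hu v hv huv := by
    rcases Finset.mem_union.1 hu with hu | hu <;> rcases Finset.mem_union.1 hv with hv | hv
    · obtain ⟨B, hB, hB'⟩ := hL.adj u hu v hv huv
      exact ⟨B, List.mem_append_left _ hB, hB'⟩
    · exact absurd huv (hadj u hu v hv)
    · exact absurd huv.symm (hadj v hv u hu)
    · obtain ⟨B, hB, hB'⟩ := hM.adj u hu v hv huv
      exact ⟨B, List.mem_append_right _ hB, hB'⟩
  consecutive v := by
    by_cases hv : v ∈ S
    · exact (hL.consecutive v).append fun B hB hvB ↦
        Finset.disjoint_left.1 hSR hv (hM.subset B hB hvB)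
    · exact (hM.consecutive v).append_left fun B hB hvB ↦ hv (hL.subset B hB hvB)
  card_le B hB := by
    rcases List.mem_append.1 hB with hB | hB
    exacts [hL.card_le B hB, hM.card_le B hB]

theorem exists_isPathDecompList_of_componentIn {A : Finset V}
    (h : ∀ v ∈ A, ∃ L, G.IsPathDecompList (G.componentIn A v) k L) :
    ∃ L, G.IsPathDecompList A k L := by
  suffices ∀ U ⊆ A, (∀ v ∈ U, G.componentIn A v ⊆ U) →
      ∃ L, G.IsPathDecompList U k L from
    this A subset_rfl fun _ _ ↦ componentIn_subset
  intro U
  induction U using Finset.strongInduction with | H U ih => ?_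
  intro hUA hU
  rcases U.eq_empty_or_nonempty with rfl | ⟨v, hv⟩
  · exact ⟨_, isPathDecompList_singleton (by simp)⟩
  set C := G.componentIn A v
  have hCU : C ⊆ U := hU v hv
  obtain ⟨L, hL⟩ := h v (hUA hv)
  obtain ⟨M, hM⟩ := ih (U \ C) (Finset.sdiff_ssubset hCU ⟨v, mem_componentIn_self (hUA hv)⟩)
    (Finset.sdiff_subset.trans hUA) fun w hw z hz ↦ Finset.mem_sdiff.2
      ⟨hU w (Finset.mem_sdiff.1 hw).1 hz,
        Finset.disjoint_left.1 (disjoint_componentIn (Finset.mem_sdiff.1 hw).2) hz⟩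
  have hLM := hL.append hM Finset.disjoint_sdiff fun u hu w hw huw ↦
    (Finset.mem_sdiff.1 hw).2 (mem_componentIn_of_adj hu (hUA (Finset.mem_sdiff.1 hw).1) huw)
  exact ⟨L ++ M, by rwa [Finset.union_sdiff_of_subset hCU] at hLM⟩

theorem IsPathDecompList.map_insert (hL : G.IsPathDecompList S k L) (hp : p ∉ S) :
    G.IsPathDecompList (insert p S) (k + 1) ({p} :: L.map (insert p)) where
  subset B hB := by
    rcases List.mem_cons.1 hB with rfl | hB
    · simp
    · obtain ⟨B', hB', rfl⟩ := List.mem_map.1 hB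
      exact Finset.insert_subset_insert p (hL.subset B' hB')
  cover v hv := by
    rcases Finset.mem_insert.1 hv with rfl | hv
    · exact ⟨{v}, by simp, by simp⟩
    · obtain ⟨B, hB, hvB⟩ := hL.cover v hv
      exact ⟨insert p B, List.mem_cons_of_mem _ (List.mem_map_of_mem hB),
        Finset.mem_insert_of_mem hvB⟩
  adj u hu v hv huv := by
    simp only [Finset.mem_insert] at hu hv
    rcases hu with hu | hu <;> rcases hv with hv | hv
    · exact absurd (hu.trans hv.symm) huv.ne
    · obtain ⟨B, hB, hvB⟩ := hL.cover v hv
      exact ⟨insert p B, List.mem_cons_of_mem _ (List.mem_map_of_mem hB), by simp [hu],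
        by simp [hvB]⟩
    · obtain ⟨B, hB, huB⟩ := hL.cover u hu
      exact ⟨insert p B, List.mem_cons_of_mem _ (List.mem_map_of_mem hB), by simp [huB],
        by simp [hv]⟩
    · obtain ⟨B, hB, huB, hvB⟩ := hL.adj u hu v hv huv
      exact ⟨insert p B, List.mem_cons_of_mem _ (List.mem_map_of_mem hB), by simp [huB],
        by simp [hvB]⟩
  consecutive v := by
    by_cases hv : v = p
    · subst hv
      exact (bagsPrefix_of_forall_mem (by simp)).bagsConsecutive
    · exact ((hL.consecutive v).map_insert hv).append_left (M := [{p}]) (by simpa)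
  card_le B hB := by
    rcases List.mem_cons.1 hB with rfl | hB
    · simp
    · obtain ⟨B', hB', rfl⟩ := List.mem_map.1 hB
      exact (Finset.card_insert_le p B').trans (by simpa using hL.card_le B' hB')

theorem bagsPrefix_append_cons_pair (hpL : ∀ B ∈ L, p ∈ B) (hpM : ∀ B ∈ M, p ∉ B) :
    BagsPrefix (L ++ {p, q} :: M) p := by
  refine ⟨L ++ [{p, q}], M, by simp, fun B hB ↦ ?_, hpM⟩
  rcases List.mem_append.1 hB with hB | hB
  exacts [hpL B hB, by simp_all]

theorem IsPathDecompList.bagsConsecutive_append_cons_pair (hL : G.IsPathDecompList S k L)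
    (hM : G.IsPathDecompList R k M) (hSR : Disjoint S R) (hp : p ∈ S) (hq : q ∈ R)
    (hpL : ∀ B ∈ L, p ∈ B) (hqM : BagsPrefix M q) (v : V) :
    BagsConsecutive (L ++ {p, q} :: M) v := by
  by_cases hvp : v = p
  · subst hvp
    exact (bagsPrefix_append_cons_pair hpL fun B hB hvB ↦
      Finset.disjoint_left.1 hSR hp (hM.subset B hB hvB)).bagsConsecutive
  by_cases hvq : v = q
  · subst hvq
    obtain ⟨M₁, M₂, rfl, h₁, h₂⟩ := hqM
    refine BagsConsecutive.append_left (fun B hB hvB ↦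
      Finset.disjoint_right.1 hSR hq (hL.subset B hB hvB)) ?_
    exact BagsPrefix.bagsConsecutive ⟨{p, v} :: M₁, M₂, rfl, by simpa using h₁, h₂⟩
  have hvpq : v ∉ ({p, q} : Finset V) := by simp [hvp, hvq]
  by_cases hvS : v ∈ S
  · refine (hL.consecutive v).append fun B hB hvB ↦ ?_
    rcases List.mem_cons.1 hB with rfl | hB
    exacts [hvpq hvB, Finset.disjoint_left.1 hSR hvS (hM.subset B hB hvB)]
  · have hvL : ∀ B ∈ L ++ [{p, q}], v ∉ B := fun B hB hvB ↦ by
      rcases List.mem_append.1 hB with hB | hB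
      · exact hvS (hL.subset B hB hvB)
      · exact hvpq (List.mem_singleton.1 hB ▸ hvB)
    simpa using (hM.consecutive v).append_left hvL

theorem IsPathDecompList.append_cons_pair (hL : G.IsPathDecompList S (k + 1) L)
    (hM : G.IsPathDecompList R (k + 1) M) (hSR : Disjoint S R) (hp : p ∈ S) (hq : q ∈ R)
    (hpL : ∀ B ∈ L, p ∈ B) (hqM : BagsPrefix M q)
    (hadj : ∀ u ∈ S, ∀ v ∈ R, G.Adj u v → u = p ∧ v = q) :
    G.IsPathDecompList (S ∪ R) (k + 1) (L ++ {p, q} :: M) where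
  subset B hB := by
    simp only [List.mem_append, List.mem_cons] at hB
    rcases hB with hB | rfl | hB
    · exact (hL.subset B hB).trans Finset.subset_union_left
    · exact Finset.insert_subset (Finset.mem_union_left _ hp) (by simp [hq])
    · exact (hM.subset B hB).trans Finset.subset_union_right
  cover v hv := by
    rcases Finset.mem_union.1 hv with hv | hv
    · obtain ⟨B, hB, hvB⟩ := hL.cover v hv
      exact ⟨B, by simp [hB], hvB⟩
    · obtain ⟨B, hB, hvB⟩ := hM.cover v hv
      exact ⟨B, by simp [hB], hvB⟩
  adj u hu v hv huv := by
    rcases Finset.mem_union.1 hu with hu | hu <;> rcases Finset.mem_union.1 hv with hv | hv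
    · obtain ⟨B, hB, hB'⟩ := hL.adj u hu v hv huv
      exact ⟨B, by simp [hB], hB'⟩
    · obtain ⟨rfl, rfl⟩ := hadj u hu v hv huv
      exact ⟨{u, v}, by simp, by simp⟩
    · obtain ⟨rfl, rfl⟩ := hadj v hv u hu huv.symm
      exact ⟨{v, u}, by simp, by simp⟩
    · obtain ⟨B, hB, hB'⟩ := hM.adj u hu v hv huv
      exact ⟨B, by simp [hB], hB'⟩
  consecutive := hL.bagsConsecutive_append_cons_pair hM hSR hp hq hpL hqM
  card_le B hB := by
    simp only [List.mem_append, List.mem_cons] at hB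
    rcases hB with hB | rfl | hB
    · exact hL.card_le B hB
    · exact (Finset.card_le_two).trans (by omega)
    · exact hM.card_le B hB

end PathDecompList

section Construction

variable [DecidableEq V] {a k : ℕ}

theorem exists_isPathDecompList_insert {A : Finset V} {p : V} (hp : p ∉ A)
    (hsmall : ∀ C : Finset V, G.PreconnectedIn C → #C ≤ a → ∃ L, G.IsPathDecompList C k L)
    (hA : ∀ c ∈ A, #(G.componentIn A c) ≤ a) :
    ∃ L, G.IsPathDecompList (insert p A) (k + 1) L ∧ ∀ B ∈ L, p ∈ B := by
  obtain ⟨L, hL⟩ := exists_isPathDecompList_of_componentIn fun c hc ↦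
    hsmall _ preconnectedIn_componentIn (hA c hc)
  exact ⟨_, hL.map_insert hp, by simp⟩

theorem IsAcyclic.exists_isPathDecompList_of_isSpine (hG : G.IsAcyclic)
    (hsmall : ∀ C : Finset V, G.PreconnectedIn C → #C ≤ a → ∃ L, G.IsPathDecompList C k L)
    {p : V} {P : List V} {S : Finset V} (hP : G.IsSpine S a (p :: P)) :
    ∃ L, G.IsPathDecompList S (k + 1) L ∧ BagsPrefix L p := by
  induction P generalizing p S with
  | nil =>
    obtain ⟨L, hL, hpL⟩ := exists_isPathDecompList_insert (A := S.erase p) (p := p) (by simp)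
      hsmall (by simpa [Finset.sdiff_singleton_eq_erase] using hP.card_componentIn_le)
    rw [Finset.insert_erase (hP.subset p (by simp))] at hL
    exact ⟨L, hL, bagsPrefix_of_forall_mem hpL⟩
  | cons q P ih =>
    set R := G.componentIn (S.erase p) q
    have hpS : p ∈ S := hP.subset p (by simp)
    have hpq : G.Adj p q := (List.isChain_cons_cons.1 hP.chain).1
    have hRS : R ⊆ S := componentIn_subset.trans (Finset.erase_subset p S)
    have hpSR : p ∈ S \ R :=
      Finset.mem_sdiff.2 ⟨hpS, fun h ↦ by simpa using componentIn_subset h⟩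
    have hqR : q ∈ R := hP.tail.subset q (by simp)
    -- `R` is a component of `S.erase p`, and `p` has only one neighbour in it
    have hadj : ∀ u ∈ S \ R, ∀ v ∈ R, G.Adj u v → u = p ∧ v = q := by
      intro u hu v hv huv
      have hup : u = p := by
        by_contra hup
        have hu' : u ∈ S.erase p := Finset.mem_erase.2 ⟨hup, (Finset.mem_sdiff.1 hu).1⟩
        exact (Finset.mem_sdiff.1 hu).2 (mem_componentIn_of_adj hv hu' huv.symm)
      exact ⟨hup, (hG.eq_of_adj_of_mem_componentIn (by simp) hv hpq (hup ▸ huv)).symm⟩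
    obtain ⟨L, hL, hpL⟩ := exists_isPathDecompList_insert (A := (S \ R).erase p) (p := p)
      (by simp) hsmall hP.card_componentIn_erase_sdiff_le
    rw [Finset.insert_erase hpSR] at hL
    obtain ⟨M, hM, hqM⟩ := ih hP.tail
    have hLM := hL.append_cons_pair hM Finset.sdiff_disjoint hpSR hqR hpL hqM hadj
    rw [Finset.sdiff_union_of_subset hRS] at hLM
    exact ⟨_, hLM, bagsPrefix_append_cons_pair hpL fun B hB hpB ↦
      (Finset.mem_sdiff.1 hpSR).2 (hM.subset B hB hpB)⟩

end Construction

def treeOrderBound : ℕ → ℕ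
  | 0 => 1
  | k + 1 => 3 * treeOrderBound k + 3

theorem IsAcyclic.exists_isPathDecompList [DecidableEq V] (hG : G.IsAcyclic) (k : ℕ)
    {S : Finset V} (hS : G.PreconnectedIn S) (hcard : #S ≤ treeOrderBound k) :
    ∃ L, G.IsPathDecompList S k L := by
  induction k generalizing S with
  | zero => exact ⟨[S], isPathDecompList_singleton hcard⟩
  | succ k ih =>
    rcases S.eq_empty_or_nonempty with rfl | hne
    · exact ⟨[∅], isPathDecompList_singleton (by simp)⟩
    obtain ⟨_ | ⟨p, P⟩, hP⟩ := hG.exists_isSpine hS hne hcard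
    · exact absurd rfl hP.ne_nil
    exact (hG.exists_isPathDecompList_of_isSpine (fun _ hC hC' ↦ ih hC hC') hP).imp
      fun _ h ↦ h.1

theorem IsTree.pathwidth_le [Fintype V] (hT : G.IsTree) {k : ℕ}
    (h : Fintype.card V ≤ treeOrderBound k) : pathwidth G ≤ k := by
  classical
  have hconn : G.PreconnectedIn Finset.univ := fun u _ v _ ↦
    (hT.connected.preconnected u v).elim fun w ↦ ⟨w, by simp⟩
  obtain ⟨L, hL⟩ := hT.isAcyclic.exists_isPathDecompList k hconn (by simpa using h)
  exact hL.pathwidth_le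

end SimpleGraph

/-- Every tree with pathwidth at least 3 has at least 22 vertices. -/
theorem tree_pathwidth_ge_three_card
    {V : Type} [Fintype V] (T : SimpleGraph V) (hT : T.IsTree)
    (h : 3 ≤ pathwidth T) : 22 ≤ Fintype.card V := by
  by_contra! hV
  have := hT.pathwidth_le (k := 2) (by simp [SimpleGraph.treeOrderBound]; omega)
  omega
end
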